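/- Fix m > 0 and for each C ∈ ℝ define P_C(γ) = ∫₁^γ p_C(y)·y dy for γ ∈ [1, m+1], and set L(m) = (3/10)(m+1)² − (1/20)(m+1)⁴ − 1/4 − ((m+1)⁴ − 1)/(20m) · [1 − 1/(m+1)²] and N(m) = (1/10)(m+1)⁴ − (2/5)(m+1)² − 1/2 + ((m+1)⁴ − 1)/(10m) · [1 + 1/(m+1)²]. Then L(m) < 0 and N(m) > 0, P_C(m+1) = L(m)·C + N(m), and P_C(γ) ≥ min{0, L(m)·C + N(m)} for all γ ∈ [1, m+1]. -/

import Mathlib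

open Set Filter

/-- The coefficient `A(C)` from the paper (depending on `m`). -/
noncomputable def Acoef (m C : ℝ) : ℝ :=
  3 * C / m * (1 - 1 / (m + 1) ^ 2) - 6 / m * (1 + 1 / (m + 1) ^ 2)

/-- The coefficient `B(C)` from the paper (depending on `m`). -/
noncomputable def Bcoef (m C : ℝ) : ℝ :=
  -2 * C * (1 + 1 / m - 1 / (m * (m + 1) ^ 2)) + 4 * (1 + 1 / m + 1 / (m * (m + 1) ^ 2))

/-- The polynomial `p_C(γ) = A(C)·γ³/3 + B(C)·γ²/2 + C`. -/
noncomputable def pC (m C γ : ℝ) : ℝ :=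
  Acoef m C * γ ^ 3 / 3 + Bcoef m C * γ ^ 2 / 2 + C

/-- `L(m)` from Lemma 3.2.1. -/
noncomputable def Lm (m : ℝ) : ℝ :=
  3 / 10 * (m + 1) ^ 2 - 1 / 20 * (m + 1) ^ 4 - 1 / 4 -
    ((m + 1) ^ 4 - 1) / (20 * m) * (1 - 1 / (m + 1) ^ 2)

/-- `N(m)` from Lemma 3.2.1. -/
noncomputable def Nm (m : ℝ) : ℝ :=
  1 / 10 * (m + 1) ^ 4 - 2 / 5 * (m + 1) ^ 2 - 1 / 2 +
    ((m + 1) ^ 4 - 1) / (10 * m) * (1 + 1 / (m + 1) ^ 2)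

/-- `P_C(γ) = ∫₁^γ p_C(y)·y dy`. -/
noncomputable def PC (m C γ : ℝ) : ℝ := ∫ y in (1 : ℝ)..γ, pC m C y * y

/-!
`P_C' = p_C(γ)·γ`, and `p_C' = γ·(A γ + B)` has on `γ > 0` the sign of an affine function, so
it changes sign at most once. Since `p_C(1) = 2 > 0 > -2 = p_C(m+1)`, a second sign change of
`p_C` on `[1, m+1]` would force three sign changes of `p_C'`. Hence `p_C` is nonnegative and
then negative, `P_C` increases and then decreases, and it is bounded below by the smaller of
`P_C(1) = 0` and `P_C(m+1) = L(m)·C + N(m)`.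
-/

theorem min_le_of_hasDerivAt_of_neg_persists {P f : ℝ → ℝ} {a b : ℝ}
    (hP : ∀ x ∈ Icc a b, HasDerivAt P (f x) x)
    (hf : ∀ x y, a ≤ x → x ≤ y → y ≤ b → f x < 0 → f y ≤ 0) :
    ∀ γ ∈ Icc a b, min (P a) (P b) ≤ P γ := by
  intro γ ⟨haγ, hγb⟩
  have hderiv : ∀ s ⊆ Icc a b, ∀ x ∈ interior s, HasDerivWithinAt P (f x) (interior s) x :=
    fun s hs x hx => (hP x (hs (interior_subset hx))).hasDerivWithinAt
  have hcont : ∀ s ⊆ Icc a b, ContinuousOn P s :=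
    fun s hs x hx => (hP x (hs hx)).continuousAt.continuousWithinAt
  by_cases hneg : ∃ x ∈ Icc a γ, f x < 0
  · obtain ⟨x, ⟨hax, hxγ⟩, hfx⟩ := hneg
    have hsub : Icc γ b ⊆ Icc a b := Icc_subset_Icc_left haγ
    have hanti : AntitoneOn P (Icc γ b) :=
      antitoneOn_of_hasDerivWithinAt_nonpos (convex_Icc γ b) (hcont _ hsub) (hderiv _ hsub)
        fun y hy => by
          rw [interior_Icc] at hy
          exact hf x y hax (hxγ.trans hy.1.le) hy.2.le hfx
    exact min_le_of_right_le (hanti ⟨le_rfl, hγb⟩ ⟨hγb, le_rfl⟩ hγb)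
  · push Not at hneg
    have hsub : Icc a γ ⊆ Icc a b := Icc_subset_Icc_right hγb
    have hmono : MonotoneOn P (Icc a γ) :=
      monotoneOn_of_hasDerivWithinAt_nonneg (convex_Icc a γ) (hcont _ hsub) (hderiv _ hsub)
        fun y hy => hneg y (interior_subset hy)
    exact min_le_of_left_le (hmono ⟨le_rfl, haγ⟩ ⟨haγ, le_rfl⟩ haγ)

section MulAffineDeriv

variable {g : ℝ → ℝ} {A B : ℝ}

theorem exists_sub_eq_mul_affine (hg : ∀ t, HasDerivAt g (t * (A * t + B)) t) {x y : ℝ}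
    (hxy : x < y) : ∃ u ∈ Ioo x y, g y - g x = (y - x) * u * (A * u + B) := by
  obtain ⟨u, hu, hslope⟩ := exists_hasDerivAt_eq_slope g (fun t => t * (A * t + B)) hxy
    (fun t _ => (hg t).continuousAt.continuousWithinAt) (fun t _ => hg t)
  refine ⟨u, hu, ?_⟩
  rw [mul_assoc, hslope]
  field_simp [sub_ne_zero.mpr hxy.ne']

theorem neg_of_neg_of_hasDerivAt_mul_affine (hg : ∀ t, HasDerivAt g (t * (A * t + B)) t)
    {a b x y : ℝ} (ha : 0 < a) (hga : 0 ≤ g a) (hgb : g b < 0)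
    (hax : a ≤ x) (hxy : x ≤ y) (hyb : y ≤ b) (hgx : g x < 0) : g y < 0 := by
  by_contra! hgy
  have hax' : a < x := hax.lt_of_ne (by rintro rfl; linarith)
  have hxy' : x < y := hxy.lt_of_ne (by rintro rfl; linarith)
  have hyb' : y < b := hyb.lt_of_ne (by rintro rfl; linarith)
  obtain ⟨u, ⟨hau, hux⟩, hgu⟩ := exists_sub_eq_mul_affine hg hax'
  obtain ⟨v, ⟨hxv, hvy⟩, hgv⟩ := exists_sub_eq_mul_affine hg hxy'
  obtain ⟨w, ⟨hyw, hwb⟩, hgw⟩ := exists_sub_eq_mul_affine hg hyb'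
  have hu : 0 < u := ha.trans hau
  have hv : 0 < v := by linarith
  have hw : 0 < w := by linarith
  have hlu : A * u + B < 0 := by nlinarith [mul_pos (sub_pos.2 hax') hu]
  have hlv : 0 < A * v + B := by nlinarith [mul_pos (sub_pos.2 hxy') hv]
  have hlw : A * w + B < 0 := by nlinarith [mul_pos (sub_pos.2 hyb') hw]
  -- an affine function's value at `v` interpolates its values at `u < v < w`
  have hinterp : (A * v + B) * (w - u) = (A * u + B) * (w - v) + (A * w + B) * (v - u) := by ring
  nlinarith [mul_pos hlv (by linarith : (0 : ℝ) < w - u)]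

end MulAffineDeriv

section

variable {m : ℝ} (C : ℝ)

theorem pC_one (hm : 0 < m) : pC m C 1 = 2 := by
  unfold pC Acoef Bcoef
  field_simp
  ring

theorem pC_add_one (hm : 0 < m) : pC m C (m + 1) = -2 := by
  unfold pC Acoef Bcoef
  field_simp
  ring

theorem hasDerivAt_pC (t : ℝ) : HasDerivAt (pC m C) (t * (Acoef m C * t + Bcoef m C)) t := by
  refine ((((hasDerivAt_pow 3 t).const_mul (Acoef m C)).div_const 3).add
    (((hasDerivAt_pow 2 t).const_mul (Bcoef m C)).div_const 2)).add_const C |>.congr_deriv ?_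
  push_cast
  ring

theorem continuous_pC_mul_id : Continuous fun t => pC m C t * t := by
  unfold pC
  fun_prop

theorem hasDerivAt_PC (t : ℝ) : HasDerivAt (PC m C) (pC m C t * t) t :=
  ((continuous_pC_mul_id C).integral_hasStrictDerivAt 1 t).hasDerivAt

theorem PC_one : PC m C 1 = 0 :=
  intervalIntegral.integral_same

theorem PC_add_one (hm : 0 < m) : PC m C (m + 1) = Lm m * C + Nm m := by
  have hprim : ∀ t, HasDerivAt
      (fun t => Acoef m C * t ^ 5 / 15 + Bcoef m C * t ^ 4 / 8 + C * t ^ 2 / 2) (pC m C t * t) t := by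
    intro t
    refine ((((hasDerivAt_pow 5 t).const_mul (Acoef m C)).div_const 15).add
      (((hasDerivAt_pow 4 t).const_mul (Bcoef m C)).div_const 8)).add
      (((hasDerivAt_pow 2 t).const_mul C).div_const 2) |>.congr_deriv ?_
    unfold pC
    push_cast
    ring
  rw [PC, intervalIntegral.integral_eq_sub_of_hasDerivAt (fun t _ => hprim t)
    ((continuous_pC_mul_id C).intervalIntegrable _ _)]
  unfold Acoef Bcoef Lm Nm
  field_simp
  ring

theorem Lm_eq (hm : 0 < m) :
    Lm m = -(m ^ 3 * (m + 2) * (m ^ 2 + 5 * m + 5)) / (20 * (m + 1) ^ 2) := by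
  unfold Lm
  field_simp
  ring

theorem Nm_eq (hm : 0 < m) :
    Nm m = m ^ 2 * ((m + 1) ^ 2 + 1) * (m ^ 2 + 5 * m + 5) / (10 * (m + 1) ^ 2) := by
  unfold Nm
  field_simp
  ring

theorem Lm_neg (hm : 0 < m) : Lm m < 0 := by
  rw [Lm_eq hm, neg_div]
  exact neg_neg_of_pos (by positivity)

theorem Nm_pos (hm : 0 < m) : 0 < Nm m := by
  rw [Nm_eq hm]
  positivity

/-- Lemma 3.2.1 (Pingali): `L(m) < 0`, `N(m) > 0`, `P_C(m+1) = L(m)·C + N(m)`, and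
`P_C(γ) ≥ min {0, L(m)·C + N(m)}` on `[1, m+1]`. -/
theorem stmt9 (m : ℝ) (hm : 0 < m) (C : ℝ) :
    Lm m < 0 ∧ 0 < Nm m ∧ PC m C (m + 1) = Lm m * C + Nm m ∧
    ∀ γ ∈ Set.Icc (1 : ℝ) (m + 1), min 0 (Lm m * C + Nm m) ≤ PC m C γ := by
  refine ⟨Lm_neg hm, Nm_pos hm, PC_add_one C hm, fun γ hγ => ?_⟩
  have hsign : ∀ x y, 1 ≤ x → x ≤ y → y ≤ m + 1 → pC m C x * x < 0 → pC m C y * y ≤ 0 := by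
    intro x y h1x hxy hy hx
    have hpx : pC m C x < 0 := neg_of_mul_neg_left hx (by linarith)
    have hpy : pC m C y < 0 := neg_of_neg_of_hasDerivAt_mul_affine (hasDerivAt_pC C) one_pos
      (by rw [pC_one C hm]; norm_num) (by rw [pC_add_one C hm]; norm_num) h1x hxy hy hpx
    exact mul_nonpos_of_nonpos_of_nonneg hpy.le (by linarith)
  have hmin := min_le_of_hasDerivAt_of_neg_persists (fun t _ => hasDerivAt_PC C t) hsign γ hγ
  rwa [PC_one, PC_add_one C hm] at hmin
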